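/- Let α = (α_1,…,α_n) be a sequence of nonnegative integers summing to n whose support is an upper interval (for some t, α_k ≥ 1 exactly when t ≤ k ≤ n), let e_α be the corresponding layered permutation and f_α the unique valley permutation of shape α. Then the set of fireworks permutations of shape α equals the left weak order interval [e_α, f_α⁻¹]_L = { w : e_α ≤_L w ≤_L f_α⁻¹ }, and the set of inverse fireworks permutations of shape α equals the right weak order interval [e_α, f_α]_R = { w : e_α ≤_R w ≤_R f_α }. -/

import Mathlib

open scoped Classical

noncomputable section

namespace RajRegularity

variable {n : ℕ}

/-- Maximal length of an increasing subsequence of `w(i), …, w(n)` beginning with `w(i)`: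
the largest cardinality of a set `s` of positions that contains `i`, consists of positions
`≥ i`, and on which `w` is strictly increasing. -/
def lisFrom (w : Equiv.Perm (Fin n)) (i : Fin n) : ℕ :=
  (Finset.univ.filter fun s : Finset (Fin n) =>
      i ∈ s ∧ (∀ j ∈ s, i ≤ j) ∧ ∀ j ∈ s, ∀ k ∈ s, j < k → w j < w k).sup Finset.card

/-- `rajCode w i = (n − i + 1) −` (maximal length of an increasing subsequence of
`w(i), …, w(n)` beginning with `w(i)`); here positions are 0-based, so the number of
positions `≥ i` is `n - i`. -/
def rajCode (w : Equiv.Perm (Fin n)) (i : Fin n) : ℕ :=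
  (n - (i : ℕ)) - lisFrom w i

/-- The Rajchgot index `raj w = Σᵢ rajCode w i`. -/
def raj (w : Equiv.Perm (Fin n)) : ℕ := ∑ i, rajCode w i

/-- The number of inversions of `w`: pairs of positions `i < j` with `w i > w j`. -/
def invNum (w : Equiv.Perm (Fin n)) : ℕ :=
  (Finset.univ.filter fun p : Fin n × Fin n => p.1 < p.2 ∧ w p.2 < w p.1).card

/-- The `i`-th entry of the inv code: `ℓ_i(w) = #{ j : i < j, w j < w i }`. -/
def ellCode (w : Equiv.Perm (Fin n)) (i : Fin n) : ℕ :=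
  (Finset.univ.filter fun j : Fin n => i < j ∧ w j < w i).card

/-- The set of descent positions of `w` (0-based position `j` with `w j > w (j+1)`). -/
def descents (w : Equiv.Perm (Fin n)) : Finset (Fin n) :=
  Finset.univ.filter fun j : Fin n =>
    if h : (j : ℕ) + 1 < n then w ⟨(j : ℕ) + 1, h⟩ < w j else False

/-- The major index: the sum of the (1-based) descent positions of `w`. -/
def maj (w : Equiv.Perm (Fin n)) : ℕ := ∑ j ∈ descents w, ((j : ℕ) + 1)

/-- `mCode w i`: the number of descents of `w` at positions `≥ i`. -/
def mCode (w : Equiv.Perm (Fin n)) (i : Fin n) : ℕ :=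
  ((descents w).filter fun j => i ≤ j).card

/-- `w` is dominant iff it avoids the pattern 132. -/
def Dominant (w : Equiv.Perm (Fin n)) : Prop :=
  ¬ ∃ i j k : Fin n, i < j ∧ j < k ∧ w i < w k ∧ w k < w j

/-- `w` is fireworks iff there are no positions `i < j` with `w j < w (j+1) < w i`. -/
def Fireworks (w : Equiv.Perm (Fin n)) : Prop :=
  ¬ ∃ (i j : Fin n) (h : (j : ℕ) + 1 < n),
      i < j ∧ w j < w ⟨(j : ℕ) + 1, h⟩ ∧ w ⟨(j : ℕ) + 1, h⟩ < w i

/-- `w` is inverse fireworks iff `w⁻¹` is fireworks. -/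
def InvFireworks (w : Equiv.Perm (Fin n)) : Prop := Fireworks w⁻¹

/-- `w` is a valley permutation: for some `a`, it is strictly decreasing on positions `≤ a`
and strictly increasing on positions `≥ a`. -/
def Valley (w : Equiv.Perm (Fin n)) : Prop :=
  ∃ a : ℕ, (∀ i j : Fin n, i < j → (j : ℕ) ≤ a → w j < w i) ∧
    ∀ i j : Fin n, a ≤ (i : ℕ) → i < j → w i < w j

/-- `eps w i` is the (1-based) blob index `ε_i(w) = i + r_i(w)`. -/
def eps (w : Equiv.Perm (Fin n)) (i : Fin n) : ℕ := (i : ℕ) + 1 + rajCode w i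

/-- The shape of `w`: `α_k(w) = #{ i : ε_i(w) = k }` (here `k : Fin n` stands for the
1-based index `k + 1`). -/
def shape (w : Equiv.Perm (Fin n)) : Fin n → ℕ := fun k =>
  (Finset.univ.filter fun i : Fin n => eps w i = (k : ℕ) + 1).card

/-- Dominance order on shapes: `α ⪰ β` iff every tail sum of `α` is at least the
corresponding tail sum of `β`. -/
def Dominates (α β : Fin n → ℕ) : Prop :=
  ∀ m : Fin n,
    ∑ k ∈ Finset.univ.filter (fun k : Fin n => m ≤ k), β k ≤
      ∑ k ∈ Finset.univ.filter (fun k : Fin n => m ≤ k), α k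

/-- Right weak order: `u ≤_R w` iff `w = u * v` length-additively. -/
def leR (u w : Equiv.Perm (Fin n)) : Prop :=
  ∃ v : Equiv.Perm (Fin n), w = u * v ∧ invNum w = invNum u + invNum v

/-- Left weak order: `u ≤_L w` iff `w = v * u` length-additively. -/
def leL (u w : Equiv.Perm (Fin n)) : Prop :=
  ∃ v : Equiv.Perm (Fin n), w = v * u ∧ invNum w = invNum v + invNum u

/-- Two-sided weak order: the transitive closure of the union of left and right weak
orders (both are reflexive, so we may use the reflexive-transitive closure). -/
def leLR (u w : Equiv.Perm (Fin n)) : Prop :=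
  Relation.ReflTransGen (fun a b : Equiv.Perm (Fin n) => leL a b ∨ leR a b) u w

/-- The maximum of the block of the set partition `π(w)` containing the value `v`;
the block of `v` is `{ v' : ε_{w⁻¹ v'}(w) = ε_{w⁻¹ v}(w) }`. -/
def blockMax (w : Equiv.Perm (Fin n)) (v : Fin n) : ℕ :=
  ((Finset.univ.filter fun v' : Fin n => eps w (w⁻¹ v') = eps w (w⁻¹ v)).max'
      ⟨v, Finset.mem_filter.mpr ⟨Finset.mem_univ v, rfl⟩⟩).val

/-- The fireworks map `Φ`: the one-line word of `Φ w` lists the blocks of `π(w)` in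
increasing order of their maxima, each block written in decreasing order.  Equivalently,
`Φ w` sorts the values by the key (max of block, value reversed), lexicographically. -/
def Phi (w : Equiv.Perm (Fin n)) : Equiv.Perm (Fin n) :=
  Tuple.sort fun v : Fin n => n * blockMax w v + (n - 1 - (v : ℕ))

/-- The inverse fireworks map `Φ_inv w = Φ(w⁻¹)⁻¹`. -/
def PhiInv (w : Equiv.Perm (Fin n)) : Equiv.Perm (Fin n) := (Phi w⁻¹)⁻¹

/-- Partial sums of a sequence of block sizes. -/
def psum (a : ℕ → ℕ) (m : ℕ) : ℕ := ∑ j ∈ Finset.range m, a j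

/-- The index of the block (interval `[psum a m, psum a (m+1))`) containing the value `v`. -/
def blockIdx (n : ℕ) (a : ℕ → ℕ) (v : Fin n) : ℕ :=
  ((Finset.range n).filter fun m => psum a (m + 1) ≤ (v : ℕ)).card

/-- The layered permutation with block sizes `a 0, a 1, …`: it reverses each of the
consecutive intervals `[psum a m, psum a (m+1))` of `{0, …, n-1}`.  Equivalently, its
one-line word sorts the values by (block index, value reversed) lexicographically. -/
def layered (n : ℕ) (a : ℕ → ℕ) : Equiv.Perm (Fin n) :=
  Tuple.sort fun v : Fin n => n * blockIdx n a v + (n - 1 - (v : ℕ))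

/-- The layered permutation `e_α` associated to a shape `α : Fin n → ℕ`. -/
def eOf (α : Fin n → ℕ) : Equiv.Perm (Fin n) :=
  layered n fun m => if h : m < n then α ⟨m, h⟩ else 0

/-!
Write `β i` for the index of the block of `e_α` that contains the position `i`. A permutation `w`
is fireworks exactly when `i ↦ ε_i(w)` is weakly increasing, and a weakly increasing sequence is
determined by the sizes of its fibres, which for `ε(w)` form the shape. Hence the fireworks
permutations of shape `α` are those with `ε_i(w) = β i + 1` for all `i`.

This equation amounts to two conditions on `w`: it decreases inside each block, which gives
`ε_i(w) ≥ β i + 1`, and the first position of every block is a left-to-right maximum, which gives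
`ε_i(w) ≤ β i + 1` because the support of `α` is an upper interval, so the block after the
one of `i` is nonempty. The first condition says `invSet e_α ⊆ invSet w`. On the increasing tail
of the valley `f = f_α` its shape forces `f q = α_1 + ⋯ + α_q`, so the tail values of `f` are
exactly the block starts, and the second condition says `invSet w ⊆ invSet f⁻¹`. Inverse
fireworks permutations are handled by inverting: `e_α` is an involution and the shape is
invariant under inversion.
-/

open Finset

section Counting

lemma card_filter_comp_perm {ι : Type*} [Fintype ι] (σ : Equiv.Perm ι) (P : ι → Prop)
    [DecidablePred P] : #{i | P (σ i)} = #{i | P i} :=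
  card_equiv σ (by simp)

lemma card_filter_lt_succ {ι : Type*} [Fintype ι] (g : ι → ℕ) (b : ℕ) :
    #{i | g i < b + 1} = #{i | g i < b} + #{i | g i = b} := by
  rw [← card_union_of_disjoint (disjoint_filter.2 fun _ _ h1 h2 => by omega)]
  congr 1
  ext i
  simp only [mem_filter, mem_union, mem_univ, true_and]
  omega

lemma card_filter_lt_eq_of_card_fiber_eq {ι : Type*} [Fintype ι] {g h : ι → ℕ}
    (hfib : ∀ v, #{i | g i = v} = #{i | h i = v}) (b : ℕ) :
    #{i | g i < b} = #{i | h i < b} := by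
  induction b with
  | zero => simp
  | succ b ih => rw [card_filter_lt_succ, card_filter_lt_succ, ih, hfib]

theorem _root_.Monotone.eq_of_card_fiber_eq {m : ℕ} {γ : Type*} [PartialOrder γ]
    [DecidableEq γ] {g h : Fin m → γ} (hg : Monotone g) (hh : Monotone h)
    (hfib : ∀ v, #{i | g i = v} = #{i | h i = v}) : g = h := by
  refine List.ofFn_injective (List.Perm.eq_of_sortedLE hg.sortedLE_ofFn hh.sortedLE_ofFn ?_)
  rw [← Multiset.coe_eq_coe, ← Fin.univ_val_map, ← Fin.univ_val_map]
  refine Multiset.ext' fun v => ?_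
  rw [Multiset.count_map, Multiset.count_map]
  convert hfib v using 2 <;> simp [Finset.card_def, eq_comm]

end Counting

section Chains

variable {w : Equiv.Perm (Fin n)} {i j : Fin n}

def IsChain (w : Equiv.Perm (Fin n)) (i : Fin n) (s : Finset (Fin n)) : Prop :=
  i ∈ s ∧ (∀ j ∈ s, i ≤ j) ∧ ∀ j ∈ s, ∀ k ∈ s, j < k → w j < w k

lemma card_le_lisFrom {s : Finset (Fin n)} (h : IsChain w i s) : #s ≤ lisFrom w i :=
  le_sup (f := card) (by simpa [IsChain] using h)

lemma exists_isChain_card_eq_lisFrom (w : Equiv.Perm (Fin n)) (i : Fin n) :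
    ∃ s, IsChain w i s ∧ #s = lisFrom w i := by
  -- The predicate is spelled out to match the decidability instance used in `lisFrom`.
  obtain ⟨s, hs, he⟩ := exists_mem_eq_sup
    {s : Finset (Fin n) |
      i ∈ s ∧ (∀ j ∈ s, i ≤ j) ∧ ∀ j ∈ s, ∀ k ∈ s, j < k → w j < w k}
    ⟨{i}, by simp⟩ card
  exact ⟨s, by simpa [IsChain] using hs, he.symm⟩

lemma one_le_lisFrom (w : Equiv.Perm (Fin n)) (i : Fin n) : 1 ≤ lisFrom w i := by
  simpa using card_le_lisFrom (w := w) (s := {i}) (by simp [IsChain])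

lemma lisFrom_le (w : Equiv.Perm (Fin n)) (i : Fin n) : lisFrom w i ≤ n - i := by
  obtain ⟨s, hs, hcard⟩ := exists_isChain_card_eq_lisFrom w i
  rw [← hcard, ← Fin.card_Ici]
  exact card_le_card fun j hj => mem_Ici.2 (hs.2.1 j hj)

lemma lisFrom_lt_lisFrom (hij : i < j) (hw : w i < w j) : lisFrom w j < lisFrom w i := by
  obtain ⟨s, ⟨hjs, hmin, hinc⟩, hcard⟩ := exists_isChain_card_eq_lisFrom w j
  have hi : i ∉ s := fun h => (hmin i h).not_gt hij
  have hchain : IsChain w i (insert i s) := by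
    refine ⟨mem_insert_self _ _, ?_, ?_⟩
    · simp only [mem_insert, forall_eq_or_imp, le_refl, true_and]
      exact fun k hk => hij.le.trans (hmin k hk)
    · simp only [mem_insert, forall_eq_or_imp, lt_self_iff_false, IsEmpty.forall_iff, true_and]
      refine ⟨fun k hk _ => ?_, fun k hk => ⟨fun hki => absurd (hij.trans_le (hmin k hk))
        hki.not_gt, hinc k hk⟩⟩
      rcases (hmin k hk).eq_or_lt with rfl | hjk
      · exact hw
      · exact hw.trans (hinc j hjs k hk hjk)
  have := card_le_lisFrom hchain
  rw [card_insert_of_notMem hi, hcard] at this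
  omega

lemma exists_lisFrom_eq_succ (h : 2 ≤ lisFrom w i) :
    ∃ j, i < j ∧ w i < w j ∧ lisFrom w i = lisFrom w j + 1 := by
  obtain ⟨s, ⟨his, hmin, hinc⟩, hcard⟩ := exists_isChain_card_eq_lisFrom w i
  have hne : (s.erase i).Nonempty := by
    rw [← card_pos, card_erase_of_mem his]
    omega
  set j := (s.erase i).min' hne
  have hjs : j ∈ s.erase i := min'_mem _ _
  have hij : i < j := (hmin j (mem_of_mem_erase hjs)).lt_of_ne (ne_of_mem_erase hjs).symm
  have hw : w i < w j := hinc i his j (mem_of_mem_erase hjs) hij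
  have hchain : IsChain w j (s.erase i) := ⟨hjs, fun k hk => min'_le _ k hk,
    fun a ha b hb => hinc a (mem_of_mem_erase ha) b (mem_of_mem_erase hb)⟩
  have := card_le_lisFrom hchain
  rw [card_erase_of_mem his, hcard] at this
  exact ⟨j, hij, hw, by have := lisFrom_lt_lisFrom hij hw; omega⟩

lemma lisFrom_apply_inv_le (w : Equiv.Perm (Fin n)) (i : Fin n) :
    lisFrom w (w⁻¹ i) ≤ lisFrom w⁻¹ i := by
  obtain ⟨s, ⟨his, hmin, hinc⟩, hcard⟩ := exists_isChain_card_eq_lisFrom w (w⁻¹ i)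
  have hmono : ∀ k ∈ s, ∀ l ∈ s, w k < w l → k < l := fun k hk l hl hkl =>
    lt_of_not_ge fun hlk => hkl.not_gt <| hlk.eq_or_lt.elim (fun h => by simp [h] at hkl)
      (hinc l hl k hk)
  have hchain : IsChain w⁻¹ i (s.image w) := by
    refine ⟨mem_image.2 ⟨_, his, by simp⟩, ?_, ?_⟩
    · simp only [mem_image, forall_exists_index, and_imp, forall_apply_eq_imp_iff₂]
      intro k hk
      rcases (hmin k hk).eq_or_lt with h | h
      · simp [← h]
      · simpa using (hinc _ his k hk h).le
    · simp only [mem_image, forall_exists_index, and_imp, forall_apply_eq_imp_iff₂,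
        Equiv.Perm.coe_inv, Equiv.symm_apply_apply]
      exact hmono
  rw [← hcard, ← card_image_of_injective s w.injective]
  exact card_le_lisFrom hchain

lemma lisFrom_inv (w : Equiv.Perm (Fin n)) (i : Fin n) :
    lisFrom w⁻¹ i = lisFrom w (w⁻¹ i) :=
  le_antisymm (by simpa using lisFrom_apply_inv_le w⁻¹ (w⁻¹ i)) (lisFrom_apply_inv_le w i)

end Chains

section Eps

variable {w : Equiv.Perm (Fin n)} {i j : Fin n}

lemma eps_eq (w : Equiv.Perm (Fin n)) (i : Fin n) : eps w i = n + 1 - lisFrom w i := by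
  have := lisFrom_le w i
  have := one_le_lisFrom w i
  have := i.isLt
  rw [eps, rajCode]
  omega

lemma lt_eps (w : Equiv.Perm (Fin n)) (i : Fin n) : (i : ℕ) < eps w i := by
  unfold eps
  omega

lemma eps_le (w : Equiv.Perm (Fin n)) (i : Fin n) : eps w i ≤ n := by
  have := one_le_lisFrom w i
  rw [eps_eq]
  omega

lemma eps_lt_eps (hij : i < j) (hw : w i < w j) : eps w i < eps w j := by
  have := lisFrom_lt_lisFrom hij hw
  have := lisFrom_le w i
  rw [eps_eq, eps_eq]
  omega

lemma exists_eps_eq_succ (h : eps w i < n) :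
    ∃ j, i < j ∧ w i < w j ∧ eps w j = eps w i + 1 := by
  rw [eps_eq] at h
  obtain ⟨j, hij, hw, hj⟩ := exists_lisFrom_eq_succ (w := w) (i := i) (by omega)
  refine ⟨j, hij, hw, ?_⟩
  have := lisFrom_le w i
  rw [eps_eq, eps_eq]
  omega

lemma eps_inv (w : Equiv.Perm (Fin n)) (i : Fin n) : eps w⁻¹ i = eps w (w⁻¹ i) := by
  rw [eps_eq, eps_eq, lisFrom_inv]

lemma shape_inv (w : Equiv.Perm (Fin n)) : shape w⁻¹ = shape w := by
  funext k
  simp only [shape, eps_inv]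
  exact card_filter_comp_perm w⁻¹ (fun i => eps w i = k + 1)

end Eps

section Fireworks

variable {w : Equiv.Perm (Fin n)} {i j k : Fin n}

lemma Fireworks.apply_lt_of_ascent (hw : Fireworks w) (hjk : (k : ℕ) = j + 1)
    (hasc : w j < w k) (hik : i < k) : w i < w k := by
  rcases (show i ≤ j by rw [Fin.lt_def] at hik; rw [Fin.le_def]; omega).eq_or_lt with rfl | hij
  · exact hasc
  · have hk : k = ⟨j + 1, by omega⟩ := Fin.ext hjk
    rw [hk] at hasc ⊢
    refine lt_of_not_ge fun h => hw ⟨i, j, _, hij, hasc, h.lt_of_ne (w.injective.ne ?_)⟩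
    rw [Fin.lt_def] at hij
    simp [Fin.ext_iff]
    omega

lemma Fireworks.exists_ascent_top_between (hw : Fireworks w) {p q r : Fin n} (hpq : p < q)
    (hqr : q < r) (hwqr : w q < w r) : ∃ x, q < x ∧ x ≤ r ∧ w r ≤ w x ∧ w p < w x := by
  have hrS : r ∈ ({x | q < x ∧ w r ≤ w x} : Finset (Fin n)) := by simp [hqr]
  set x := ({x | q < x ∧ w r ≤ w x} : Finset (Fin n)).min' ⟨r, hrS⟩
  obtain ⟨hqx, hrx⟩ : q < x ∧ w r ≤ w x := by simpa using min'_mem _ ⟨r, hrS⟩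
  have hx0 : 0 < (x : ℕ) := lt_of_le_of_lt (Nat.zero_le _) hqx
  set y : Fin n := ⟨x - 1, by omega⟩
  have hyx : (x : ℕ) = y + 1 := by simp [y]; omega
  have hqy : q ≤ y := by rw [Fin.le_def]; rw [Fin.lt_def] at hqx; simp [y]; omega
  have hwy : w y < w r := by
    rcases hqy.eq_or_lt with hqy | hqy
    · rwa [← hqy]
    · refine lt_of_not_ge fun h => ?_
      have : x ≤ y := min'_le _ y (by simp [hqy, h])
      rw [Fin.le_def] at this
      omega
  exact ⟨x, hqx, min'_le _ r hrS, hrx,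
    hw.apply_lt_of_ascent hyx (hwy.trans_le hrx) (hpq.trans hqx)⟩

lemma Fireworks.eps_le_eps_of_apply_lt (hw : Fireworks w) :
    ∀ q p : Fin n, p < q → w q < w p → eps w p ≤ eps w q := by
  intro q
  induction q using WellFoundedGT.induction with
  | _ q ih =>
  intro p hpq hwq
  by_cases hq : eps w q < n
  swap
  · have := eps_le w p
    omega
  -- Step from `q` to the next element `r` of a longest chain. If `w r < w p`, fireworks gives
  -- a left-to-right maximum `x ∈ (q, r]` above `w r`, and induction compares `x` with `r`.
  obtain ⟨r, hqr, hwr, hr⟩ := exists_eps_eq_succ hq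
  rcases lt_or_gt_of_ne (w.injective.ne (hpq.trans hqr).ne) with hpr | hrp
  · have := eps_lt_eps (hpq.trans hqr) hpr
    omega
  obtain ⟨x, hqx, hxr, hrx, hpx⟩ := hw.exists_ascent_top_between hpq hqr hwr
  have hxr' : eps w x ≤ eps w r := by
    rcases hxr.eq_or_lt with rfl | hxr
    · exact le_rfl
    · exact ih r hqr x hxr (hrx.lt_of_ne (w.injective.ne hxr.ne'))
  have := eps_lt_eps (hpq.trans hqx) hpx
  omega

lemma Fireworks.monotone_eps (hw : Fireworks w) : Monotone (eps w) := by
  intro p q hpq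
  rcases hpq.eq_or_lt with rfl | hpq
  · exact le_rfl
  rcases lt_or_gt_of_ne (w.injective.ne hpq.ne) with h | h
  · exact (eps_lt_eps hpq h).le
  · exact hw.eps_le_eps_of_apply_lt q p hpq h

lemma fireworks_of_monotone_eps (h : Monotone (eps w)) : Fireworks w := by
  rintro ⟨i, j, hj, hij, hasc, hdesc⟩
  set k : Fin n := ⟨j + 1, hj⟩
  -- Take the violating position `m` as late as possible; then a longest chain from `m` has to
  -- jump past `k` to some `r`, and `eps w k < eps w r = eps w m + 1 ≤ eps w k`.
  have hiS : i ∈ ({x | x < j ∧ w k < w x} : Finset (Fin n)) := by simp [hij, hdesc]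
  set m := ({x | x < j ∧ w k < w x} : Finset (Fin n)).max' ⟨i, hiS⟩
  obtain ⟨hmj, hkm⟩ : m < j ∧ w k < w m := by simpa using max'_mem _ ⟨i, hiS⟩
  have hjk : j < k := by simp [k, Fin.lt_def]
  have hjk' := eps_lt_eps hjk hasc
  have hmj' := h hmj.le
  obtain ⟨r, hmr, hwr, hr⟩ :=
    exists_eps_eq_succ (w := w) (i := m) (by have := eps_le w k; omega)
  have hjr : j < r := by
    refine lt_of_not_ge fun hrj => ?_
    rcases hrj.lt_or_eq with hrj | rfl
    · exact (le_max' _ r (by simp [hrj, hkm.trans hwr])).not_gt hmr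
    · exact lt_asymm hasc (hkm.trans hwr)
  have hkr : k < r := by
    refine lt_of_le_of_ne ?_ fun hkr => (hkm.trans hwr).ne (congrArg w hkr)
    rw [Fin.le_def]
    rw [Fin.lt_def] at hjr
    simp [k]
    omega
  have := eps_lt_eps hkr (hkm.trans hwr)
  omega

lemma fireworks_iff_monotone_eps : Fireworks w ↔ Monotone (eps w) :=
  ⟨Fireworks.monotone_eps, fireworks_of_monotone_eps⟩

end Fireworks

section WeakOrder

def invSet (w : Equiv.Perm (Fin n)) : Finset (Fin n × Fin n) :=
  {p | p.1 < p.2 ∧ w p.2 < w p.1}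

lemma mem_invSet {w : Equiv.Perm (Fin n)} {p : Fin n × Fin n} :
    p ∈ invSet w ↔ p.1 < p.2 ∧ w p.2 < w p.1 := by
  simp [invSet]

lemma invNum_eq_card_invSet (w : Equiv.Perm (Fin n)) : invNum w = #(invSet w) := rfl

lemma invSet_one : invSet (1 : Equiv.Perm (Fin n)) = ∅ := by
  ext p
  simpa [mem_invSet] using fun h : p.1 < p.2 => h.le

lemma invNum_mul_inv (w u : Equiv.Perm (Fin n)) :
    invNum (w * u⁻¹) = #(invSet w \ invSet u) + #(invSet u \ invSet w) := by
  set S : Finset (Fin n × Fin n) := {q | u q.1 < u q.2 ∧ w q.2 < w q.1}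
  have hS : invNum (w * u⁻¹) = #S := by
    rw [invNum_eq_card_invSet]
    exact card_equiv (Equiv.prodCongr u⁻¹ u⁻¹) fun p => by simp [S, mem_invSet]
  have hlt : #{q ∈ S | q.1 < q.2} = #(invSet w \ invSet u) := by
    congr 1
    ext q
    simp only [S, mem_filter, mem_sdiff, mem_invSet, mem_univ, true_and]
    have := u.injective.ne (a₁ := q.1) (a₂ := q.2)
    grind
  have hgt : #{q ∈ S | ¬ q.1 < q.2} = #(invSet u \ invSet w) := by
    refine card_equiv (Equiv.prodComm _ _) fun q => ?_
    simp only [S, mem_filter, mem_sdiff, mem_invSet, mem_univ, true_and, Equiv.prodComm_apply,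
      Prod.fst_swap, Prod.snd_swap]
    have := w.injective.ne (a₁ := q.1) (a₂ := q.2)
    grind
  rw [hS, ← card_filter_add_card_filter_not (s := S) (fun q : Fin n × Fin n => q.1 < q.2), hlt,
    hgt]

lemma invNum_inv (w : Equiv.Perm (Fin n)) : invNum w⁻¹ = invNum w := by
  simpa [invSet_one, invNum_eq_card_invSet] using invNum_mul_inv 1 w

lemma leL_iff_invNum {u w : Equiv.Perm (Fin n)} :
    leL u w ↔ invNum w = invNum (w * u⁻¹) + invNum u :=
  ⟨fun ⟨v, hv, h⟩ => by simpa [hv] using h, fun h => ⟨w * u⁻¹, by simp, h⟩⟩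

lemma leL_iff_invSet_subset {u w : Equiv.Perm (Fin n)} : leL u w ↔ invSet u ⊆ invSet w := by
  have hw := card_sdiff_add_card_inter (invSet w) (invSet u)
  have hu := card_sdiff_add_card_inter (invSet u) (invSet w)
  rw [inter_comm] at hu
  rw [leL_iff_invNum, invNum_mul_inv, invNum_eq_card_invSet, invNum_eq_card_invSet,
    ← sdiff_eq_empty_iff_subset, ← card_eq_zero]
  omega

lemma leR_iff_leL_inv {u w : Equiv.Perm (Fin n)} : leR u w ↔ leL u⁻¹ w⁻¹ := by
  rw [leL_iff_invNum]
  refine ⟨fun ⟨v, hv, h⟩ => ?_, fun h => ⟨u⁻¹ * w, by simp, ?_⟩⟩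
  · rw [inv_inv, invNum_inv, invNum_inv, show w⁻¹ * u = v⁻¹ by simp [hv], invNum_inv, h,
      add_comm]
  · rw [inv_inv, invNum_inv, invNum_inv, ← invNum_inv (w⁻¹ * u), mul_inv_rev, inv_inv] at h
    omega

end WeakOrder

section Blocks

variable {a : ℕ → ℕ}

lemma psum_mono (a : ℕ → ℕ) : Monotone (psum a) :=
  fun _ _ h => sum_le_sum_of_subset (range_subset_range.2 h)

lemma psum_succ (a : ℕ → ℕ) (m : ℕ) : psum a (m + 1) = psum a m + a m :=
  sum_range_succ a m

lemma blockIdx_mono : Monotone (blockIdx n a) := fun _ _ h =>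
  card_le_card fun _ => by simp only [mem_filter]; exact fun hb => ⟨hb.1, hb.2.trans h⟩

lemma le_blockIdx_iff (hn : psum a n = n) (i : Fin n) (b : ℕ) :
    b ≤ blockIdx n a i ↔ psum a b ≤ i := by
  constructor
  · intro hb
    refine le_of_not_gt fun hi => hb.not_gt ?_
    obtain ⟨b, rfl⟩ : ∃ c, b = c + 1 :=
      Nat.exists_eq_add_one.2 (Nat.pos_of_ne_zero (by rintro rfl; simp [psum] at hi))
    refine (card_le_card (t := range b) fun m hm => mem_range.2 ?_).trans_lt (by simp)
    simp only [mem_filter] at hm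
    exact lt_of_not_ge fun hbm => (hm.2.trans_lt hi).not_ge (psum_mono a (by omega))
  · intro hb
    have hbn : b ≤ n := le_of_not_gt fun h => by
      have := psum_mono a h.le; have := i.isLt; omega
    refine (card_range b).symm.le.trans (card_le_card fun m hm => ?_)
    simp only [mem_range] at hm
    simp only [mem_filter, mem_range]
    exact ⟨by omega, (psum_mono a hm).trans hb⟩

lemma blockIdx_lt_iff (hn : psum a n = n) (i : Fin n) (b : ℕ) :
    blockIdx n a i < b ↔ (i : ℕ) < psum a b := by
  simpa using (le_blockIdx_iff hn i b).not

lemma blockIdx_lt (hn : psum a n = n) (i : Fin n) : blockIdx n a i < n :=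
  (blockIdx_lt_iff hn i n).2 (by rw [hn]; exact i.isLt)

lemma card_blockIdx_lt (hn : psum a n = n) {b : ℕ} (hb : b ≤ n) :
    #{i : Fin n | blockIdx n a i < b} = psum a b := by
  simp_rw [blockIdx_lt_iff hn]
  rw [Fin.card_filter_val_lt]
  have := psum_mono a hb
  omega

lemma card_blockIdx_eq (hn : psum a n = n) {b : ℕ} (hb : b < n) :
    #{i : Fin n | blockIdx n a i = b} = a b := by
  have := card_filter_lt_succ (blockIdx n a) b
  rw [card_blockIdx_lt hn hb, card_blockIdx_lt hn hb.le, psum_succ] at this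
  omega

def IsBlockStart (a : ℕ → ℕ) (j : Fin n) : Prop := ∃ b, (j : ℕ) = psum a b

end Blocks

section Layered

variable {a : ℕ → ℕ} {i j : Fin n}

lemma layered_sort_key_le (hij : i ≤ j) :
    n * blockIdx n a (layered n a i) + (n - 1 - layered n a i) ≤
      n * blockIdx n a (layered n a j) + (n - 1 - layered n a j) :=
  Tuple.monotone_sort (fun v : Fin n => n * blockIdx n a v + (n - 1 - v)) hij

lemma monotone_blockIdx_layered : Monotone fun i => blockIdx n a (layered n a i) := by
  intro i j hij
  refine le_of_not_gt fun h : blockIdx n a (layered n a j) < blockIdx n a (layered n a i) => ?_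
  have := Nat.mul_le_mul_left n (Nat.succ_le_of_lt h)
  rw [Nat.mul_succ] at this
  have := layered_sort_key_le (a := a) hij
  have := (layered n a i).isLt
  omega

lemma blockIdx_layered (i : Fin n) : blockIdx n a (layered n a i) = blockIdx n a i :=
  congrFun (monotone_blockIdx_layered.eq_of_card_fiber_eq blockIdx_mono fun v =>
    card_filter_comp_perm (layered n a) (fun i => blockIdx n a i = v)) i

lemma layered_lt_layered_of_blockIdx_eq (hij : i < j) (hb : blockIdx n a i = blockIdx n a j) :
    layered n a j < layered n a i := by
  have := layered_sort_key_le (a := a) hij.le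
  rw [blockIdx_layered, blockIdx_layered, hb] at this
  refine lt_of_le_of_ne ?_ ((layered n a).injective.ne hij.ne')
  rw [Fin.le_def]
  have := (layered n a i).isLt
  omega

lemma layered_lt_layered_of_blockIdx_lt (hb : blockIdx n a i < blockIdx n a j) :
    layered n a i < layered n a j :=
  blockIdx_mono.reflect_lt (by rwa [blockIdx_layered, blockIdx_layered])

lemma mem_invSet_layered {p : Fin n × Fin n} :
    p ∈ invSet (layered n a) ↔ p.1 < p.2 ∧ blockIdx n a p.1 = blockIdx n a p.2 := by
  rw [mem_invSet]
  refine ⟨fun ⟨hp, he⟩ => ⟨hp, (blockIdx_mono hp.le).eq_of_not_lt fun hb =>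
    (layered_lt_layered_of_blockIdx_lt hb).not_gt he⟩, fun ⟨hp, hb⟩ =>
    ⟨hp, layered_lt_layered_of_blockIdx_eq hp hb⟩⟩

lemma invSet_layered_subset_iff {w : Equiv.Perm (Fin n)} :
    invSet (layered n a) ⊆ invSet w ↔
      ∀ i j, i < j → blockIdx n a i = blockIdx n a j → w j < w i := by
  refine ⟨fun h i j hij hb => ?_, fun h p hp => ?_⟩
  · exact (mem_invSet.1 (h (mem_invSet_layered (p := (i, j)) |>.2 ⟨hij, hb⟩))).2
  · obtain ⟨hp, hb⟩ := mem_invSet_layered.1 hp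
    exact mem_invSet.2 ⟨hp, h _ _ hp hb⟩

lemma layered_inv : (layered n a)⁻¹ = layered n a := by
  set e := layered n a
  have hmono : StrictMono fun i => e (e i) := by
    intro i j hij
    rcases (blockIdx_mono (a := a) hij.le).eq_or_lt with hb | hb
    · refine layered_lt_layered_of_blockIdx_eq (layered_lt_layered_of_blockIdx_eq hij hb) ?_
      rw [blockIdx_layered, blockIdx_layered, hb]
    · exact layered_lt_layered_of_blockIdx_lt (by rwa [blockIdx_layered, blockIdx_layered])
  exact (eq_inv_of_mul_eq_one_left (Equiv.ext fun i => hmono.apply_eq)).symm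

end Layered

section EpsOfShape

variable {a : ℕ → ℕ} {α : Fin n → ℕ} {w : Equiv.Perm (Fin n)}

lemma card_eps_eq_of_shape (hn : psum a n = n) (hA : ∀ k : Fin n, a k = α k)
    (hw : shape w = α) (v : ℕ) :
    #{i | eps w i = v} = #{i | blockIdx n a i + 1 = v} := by
  rcases v with _ | k
  · rw [card_eq_zero.2 (filter_eq_empty_iff.2 fun i _ => by have := lt_eps w i; omega),
      card_eq_zero.2 (filter_eq_empty_iff.2 fun i _ => by omega)]
  rcases lt_or_ge k n with hk | hk
  · simp only [add_left_inj]
    rw [card_blockIdx_eq hn hk, hA ⟨k, hk⟩, ← hw]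
    rfl
  · rw [card_eq_zero.2 (filter_eq_empty_iff.2 fun i _ => by have := eps_le w i; omega),
      card_eq_zero.2 (filter_eq_empty_iff.2 fun i _ => by have := blockIdx_lt hn i; omega)]

lemma shape_eq_of_eps_eq (hn : psum a n = n) (hA : ∀ k : Fin n, a k = α k)
    (hP : ∀ i, eps w i = blockIdx n a i + 1) : shape w = α := by
  funext k
  simp only [shape, hP, add_left_inj]
  rw [card_blockIdx_eq hn k.isLt, hA]

lemma fireworks_and_shape_iff (hn : psum a n = n) (hA : ∀ k : Fin n, a k = α k) :
    Fireworks w ∧ shape w = α ↔ ∀ i, eps w i = blockIdx n a i + 1 := by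
  refine ⟨fun ⟨hw, hsh⟩ => congrFun ((fireworks_iff_monotone_eps.1 hw).eq_of_card_fiber_eq
    (fun i j hij => Nat.succ_le_succ (blockIdx_mono hij)) (card_eps_eq_of_shape hn hA hsh)),
    fun hP => ⟨fireworks_iff_monotone_eps.2 ?_, shape_eq_of_eps_eq hn hA hP⟩⟩
  intro i j hij
  simpa [hP] using blockIdx_mono hij

lemma card_eps_le_of_shape (hn : psum a n = n) (hA : ∀ k : Fin n, a k = α k)
    (hw : shape w = α) {q : ℕ} (hq : q ≤ n) : #{p | eps w p ≤ q} = psum a q := by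
  simp_rw [← Nat.lt_succ_iff]
  rw [card_filter_lt_eq_of_card_fiber_eq (card_eps_eq_of_shape hn hA hw)]
  simp_rw [Nat.succ_lt_succ_iff]
  exact card_blockIdx_lt hn hq

end EpsOfShape

section BlockConditions

variable {a : ℕ → ℕ} {w : Equiv.Perm (Fin n)} {i j : Fin n}

lemma apply_lt_apply_of_blockIdx_eq (hP : ∀ i, eps w i = blockIdx n a i + 1) (hij : i < j)
    (hb : blockIdx n a i = blockIdx n a j) : w j < w i := by
  refine (lt_or_gt_of_ne (w.injective.ne hij.ne')).resolve_right fun hw => ?_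
  have := eps_lt_eps hij hw
  rw [hP, hP, hb] at this
  exact this.false

lemma apply_lt_apply_of_isBlockStart (hn : psum a n = n)
    (hP : ∀ i, eps w i = blockIdx n a i + 1) (hj : IsBlockStart a j) (hij : i < j) :
    w i < w j := by
  obtain ⟨c, hc⟩ := hj
  refine (lt_or_gt_of_ne (w.injective.ne hij.ne)).resolve_right fun hji => ?_
  -- `x` is the last position before `j` with a larger value; the next element `r` of a longest
  -- chain from `x` can lie neither before `j` (maximality of `x`) nor after it
  -- (`eps w j < eps w r = eps w x + 1 ≤ eps w j`).
  have hiS : i ∈ ({x | x < j ∧ w j < w x} : Finset (Fin n)) := by simp [hij, hji]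
  set x := ({x | x < j ∧ w j < w x} : Finset (Fin n)).max' ⟨i, hiS⟩
  obtain ⟨hxj, hjx⟩ : x < j ∧ w j < w x := by simpa using max'_mem _ ⟨i, hiS⟩
  have hbx : blockIdx n a x < blockIdx n a j :=
    ((blockIdx_lt_iff hn x c).2 (hc ▸ hxj)).trans_le ((le_blockIdx_iff hn j c).2 hc.ge)
  obtain ⟨r, hxr, hwr, hr⟩ := exists_eps_eq_succ (w := w) (i := x)
    (by have := eps_le w j; rw [hP] at this ⊢; omega)
  rcases lt_trichotomy r j with hrj | rfl | hjr
  · exact (le_max' _ r (by simp [hrj, hjx.trans hwr])).not_gt hxr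
  · exact lt_asymm hjx hwr
  · have := eps_lt_eps hjr (hjx.trans hwr)
    rw [hr, hP, hP] at this
    omega

lemma blockIdx_succ_le_eps (hn : psum a n = n)
    (hdec : ∀ i j, i < j → blockIdx n a i = blockIdx n a j → w j < w i) (i : Fin n) :
    blockIdx n a i + 1 ≤ eps w i := by
  obtain ⟨s, ⟨his, hmin, hinc⟩, hcard⟩ := exists_isChain_card_eq_lisFrom w i
  have hinj : StrictMonoOn (blockIdx n a) s := fun j hj k hk hjk =>
    (blockIdx_mono hjk.le).lt_of_ne fun hb => (hinc j hj k hk hjk).not_gt (hdec j k hjk hb)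
  have := card_le_card_of_injOn (t := Ico (blockIdx n a i) n) (blockIdx n a)
    (fun j hj => mem_Ico.2 ⟨blockIdx_mono (hmin j hj), blockIdx_lt hn j⟩) hinj.injOn
  rw [hcard, Nat.card_Ico] at this
  have := one_le_lisFrom w i
  rw [eps_eq]
  omega

lemma eps_le_blockIdx_succ (hn : psum a n = n)
    (hsupp : ∀ b, b + 1 < n → 0 < a b → 0 < a (b + 1))
    (hlr : ∀ j, IsBlockStart a j → ∀ i < j, w i < w j) (i : Fin n) :
    eps w i ≤ blockIdx n a i + 1 := by
  induction i using WellFoundedGT.induction with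
  | _ j ih =>
  set b := blockIdx n a j
  by_cases hb : b + 1 < n
  swap
  · have := eps_le w j
    omega
  have hj' := (blockIdx_lt_iff hn j (b + 1)).1 (Nat.lt_succ_self b)
  have hab : 0 < a (b + 1) := hsupp b hb (by
    have := (le_blockIdx_iff hn j b).1 le_rfl
    rw [psum_succ] at hj'
    omega)
  have hx : psum a (b + 1) < n := by
    have := psum_mono a (show b + 2 ≤ n by omega)
    rw [psum_succ, hn] at this
    omega
  set x : Fin n := ⟨psum a (b + 1), hx⟩
  have hxb : blockIdx n a x = b + 1 := le_antisymm
    (Nat.lt_succ_iff.1 <| (blockIdx_lt_iff hn x (b + 1 + 1)).2 <| by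
      show psum a (b + 1) < psum a (b + 1 + 1)
      rw [psum_succ a (b + 1)]
      omega)
    ((le_blockIdx_iff hn x (b + 1)).2 le_rfl)
  have hjx : j < x := hj'
  have := eps_lt_eps hjx (hlr x ⟨b + 1, rfl⟩ j hjx)
  have := ih x hjx
  omega

lemma eps_eq_blockIdx_succ_iff (hn : psum a n = n)
    (hsupp : ∀ b, b + 1 < n → 0 < a b → 0 < a (b + 1)) :
    (∀ i, eps w i = blockIdx n a i + 1) ↔
      (∀ i j, i < j → blockIdx n a i = blockIdx n a j → w j < w i) ∧
        ∀ j, IsBlockStart a j → ∀ i < j, w i < w j :=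
  ⟨fun hP => ⟨fun _ _ => apply_lt_apply_of_blockIdx_eq hP,
    fun _ hj _ => apply_lt_apply_of_isBlockStart hn hP hj⟩,
   fun ⟨hdec, hlr⟩ i => le_antisymm (eps_le_blockIdx_succ hn hsupp hlr i)
    (blockIdx_succ_le_eps hn hdec i)⟩

end BlockConditions

section Valley

def ValleyAt (f : Equiv.Perm (Fin n)) (b : Fin n) : Prop :=
  (∀ i j, i < j → j ≤ b → f j < f i) ∧ ∀ i j, b ≤ i → i < j → f i < f j

lemma Valley.exists_valleyAt {f : Equiv.Perm (Fin n)} (hf : Valley f) (i₀ : Fin n) :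
    ∃ b, ValleyAt f b := by
  obtain ⟨c, hdec, hinc⟩ := hf
  have := i₀.isLt
  refine ⟨⟨min c (n - 1), by omega⟩, fun i j hij hj => hdec i j hij ?_,
    fun i j hi hij => hinc i j ?_ hij⟩
  · rw [Fin.le_def] at hj
    exact hj.trans (min_le_left _ _)
  · rw [Fin.le_def] at hi
    rw [Fin.lt_def] at hij
    have := j.isLt
    simp only at hi
    omega

variable {a : ℕ → ℕ} {α : Fin n → ℕ} {f : Equiv.Perm (Fin n)} {b : Fin n}

namespace ValleyAt

lemma strictMonoOn (hf : ValleyAt f b) : StrictMonoOn f (Set.Ici b) :=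
  fun i hi _ _ hij => hf.2 i _ hi hij

lemma lt_of_lt_of_apply_lt (hf : ValleyAt f b) {i k : Fin n} (hik : i < k) (h : f i < f k) :
    b < k :=
  lt_of_not_ge fun hkb => (hf.1 i k hik hkb).not_gt h

lemma apply_le (hf : ValleyAt f b) (x : Fin n) : f b ≤ f x := by
  rcases lt_trichotomy x b with h | rfl | h
  · exact (hf.1 x b h le_rfl).le
  · exact le_rfl
  · exact (hf.2 b x le_rfl h).le

lemma lisFrom_eq (hf : ValleyAt f b) {q : Fin n} (hq : b ≤ q) : lisFrom f q = n - q := by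
  refine le_antisymm (lisFrom_le f q) ?_
  rw [← Fin.card_Ici]
  exact card_le_lisFrom ⟨mem_Ici.2 le_rfl, fun j hj => mem_Ici.1 hj,
    fun j hj k _ hjk => hf.2 j k (hq.trans (mem_Ici.1 hj)) hjk⟩

lemma apply_lt_iff (hf : ValleyAt f b) {q : Fin n} (hq : b ≤ q) (p : Fin n) :
    f p < f q ↔ n - q < lisFrom f p := by
  constructor
  · intro h
    have hpq : p < q := lt_of_not_ge fun hqp =>
      (hf.strictMonoOn.le_iff_le hq (hq.trans hqp)).2 hqp |>.not_gt h
    rw [← hf.lisFrom_eq hq]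
    exact lisFrom_lt_lisFrom hpq h
  · refine fun h => lt_of_not_ge fun hqp => h.not_ge ?_
    obtain ⟨s, ⟨hps, hmin, hinc⟩, hcard⟩ := exists_isChain_card_eq_lisFrom f p
    have hsub : s ⊆ insert p (Ioi q) := fun k hk => by
      rcases eq_or_ne k p with rfl | hkp
      · exact mem_insert_self _ _
      have hpk := (hmin k hk).lt_of_ne' hkp
      have hbk := (hf.lt_of_lt_of_apply_lt hpk (hinc p hps k hk hpk)).le
      exact mem_insert_of_mem <| mem_Ioi.2 <| (hf.strictMonoOn.lt_iff_lt hq hbk).1 <|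
        hqp.trans_lt (hinc p hps k hk hpk)
    have := (card_le_card hsub).trans (card_insert_le _ _)
    rw [Fin.card_Ioi, hcard] at this
    omega

lemma val_apply (hf : ValleyAt f b) {q : Fin n} (hq : b ≤ q) :
    (f q : ℕ) = #{p | eps f p ≤ q} := by
  calc (f q : ℕ) = #{v | v < f q} := by rw [filter_gt_eq_Iio, Fin.card_Iio]
    _ = #{p | f p < f q} := (card_filter_comp_perm f (· < f q)).symm
    _ = #{p | eps f p ≤ q} := by
      congr 1
      ext p
      simp only [mem_filter, mem_univ, true_and, hf.apply_lt_iff hq, eps_eq]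
      have := lisFrom_le f p
      have := q.isLt
      omega

lemma val_apply_eq_psum (hn : psum a n = n) (hA : ∀ k : Fin n, a k = α k)
    (hsh : shape f = α) (hf : ValleyAt f b) {q : Fin n} (hq : b ≤ q) :
    (f q : ℕ) = psum a q := by
  rw [hf.val_apply hq, card_eps_le_of_shape hn hA hsh q.isLt.le]

lemma le_inv_apply_iff (hn : psum a n = n) (hA : ∀ k : Fin n, a k = α k)
    (hsh : shape f = α) (hf : ValleyAt f b) (v : Fin n) :
    b ≤ f⁻¹ v ↔ IsBlockStart a v := by
  constructor
  · intro h
    exact ⟨f⁻¹ v, by simpa using hf.val_apply_eq_psum hn hA hsh h⟩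
  · rintro ⟨c, hc⟩
    have hcn : c < n := lt_of_not_ge fun h => by
      have := psum_mono a h
      omega
    rcases le_or_gt b ⟨c, hcn⟩ with hbc | hcb
    · have hfc : f ⟨c, hcn⟩ = v := Fin.ext (by rw [hf.val_apply_eq_psum hn hA hsh hbc, hc])
      simpa [← hfc] using hbc
    · have hfb := hf.val_apply_eq_psum hn hA hsh le_rfl
      have hcb := psum_mono a (Fin.lt_def.1 hcb).le
      have hbv : f b ≤ v := by simpa using hf.apply_le (f⁻¹ v)
      have : f b = v := le_antisymm hbv (by rw [Fin.le_def]; simp only at hcb; omega)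
      simp [← this]

lemma mem_invSet_inv (hf : ValleyAt f b) {p : Fin n × Fin n} :
    p ∈ invSet f⁻¹ ↔ p.1 < p.2 ∧ f⁻¹ p.2 < b := by
  rw [mem_invSet]
  refine and_congr_right fun huv => ⟨fun h => lt_of_not_ge fun hb => ?_, fun h => ?_⟩
  · simpa using (hf.2 _ _ hb h).not_gt (by simpa using huv)
  · refine lt_of_not_ge fun h' => ?_
    rcases h'.eq_or_lt with h' | h'
    · exact huv.ne (by simpa using h')
    · exact (hf.1 _ _ h' h.le).not_gt (by simpa using huv)

end ValleyAt

lemma invSet_subset_invSet_inv_iff {w : Equiv.Perm (Fin n)} (hn : psum a n = n)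
    (hA : ∀ k : Fin n, a k = α k) (hf : Valley f) (hsh : shape f = α) :
    invSet w ⊆ invSet f⁻¹ ↔ ∀ j, IsBlockStart a j → ∀ i < j, w i < w j := by
  constructor
  · intro h j hj i hij
    obtain ⟨b, hb⟩ := hf.exists_valleyAt j
    refine (lt_or_gt_of_ne (w.injective.ne hij.ne)).resolve_right fun hji => ?_
    have := (hb.mem_invSet_inv.1 (h (mem_invSet (p := (i, j)) |>.2 ⟨hij, hji⟩))).2
    exact this.not_ge ((hb.le_inv_apply_iff hn hA hsh j).2 hj)
  · rintro h ⟨i, j⟩ hp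
    obtain ⟨hij, hji⟩ := mem_invSet.1 hp
    obtain ⟨b, hb⟩ := hf.exists_valleyAt j
    refine hb.mem_invSet_inv.2 ⟨hij, lt_of_not_ge fun hbj => ?_⟩
    exact (h j ((hb.le_inv_apply_iff hn hA hsh j).1 hbj) i hij).not_gt hji

end Valley

/-- Let `α` be a composition of `n` whose support is an upper interval,
`e_α` the corresponding layered permutation, and `f` the (unique) valley permutation of
shape `α`.  Then the fireworks permutations of shape `α` are exactly the left weak order
interval `[e_α, f⁻¹]_L`, and the inverse fireworks permutations of shape `α` are exactly
the right weak order interval `[e_α, f]_R`. -/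
theorem fireworks_interval (n : ℕ) (α : Fin n → ℕ)
    (hsum : ∑ k, α k = n)
    (hsupp : ∃ t : ℕ, ∀ k : Fin n, 1 ≤ α k ↔ t ≤ (k : ℕ) + 1)
    (f : Equiv.Perm (Fin n)) (hf : Valley f) (hfshape : shape f = α) :
    (∀ w : Equiv.Perm (Fin n),
        (Fireworks w ∧ shape w = α) ↔ (leL (eOf α) w ∧ leL w f⁻¹)) ∧
    (∀ w : Equiv.Perm (Fin n),
        (InvFireworks w ∧ shape w = α) ↔ (leR (eOf α) w ∧ leR w f)) := by
  set a : ℕ → ℕ := fun m => if h : m < n then α ⟨m, h⟩ else 0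
  have hA : ∀ k : Fin n, a k = α k := fun k => dif_pos k.isLt
  have hn : psum a n = n := by
    rw [psum, ← Fin.sum_univ_eq_sum_range]
    exact (Fintype.sum_congr _ _ hA).trans hsum
  have hsupp' : ∀ b, b + 1 < n → 0 < a b → 0 < a (b + 1) := by
    obtain ⟨t, ht⟩ := hsupp
    intro b hb hab
    have := (ht ⟨b, by omega⟩).1 (by rwa [← hA])
    rw [hA ⟨b + 1, hb⟩]
    exact (ht ⟨b + 1, hb⟩).2 (by simp only at this ⊢; omega)
  have hleft : ∀ w, (Fireworks w ∧ shape w = α) ↔ (leL (eOf α) w ∧ leL w f⁻¹) := by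
    intro w
    rw [fireworks_and_shape_iff hn hA, eps_eq_blockIdx_succ_iff hn hsupp',
      leL_iff_invSet_subset, leL_iff_invSet_subset, eOf, invSet_layered_subset_iff,
      invSet_subset_invSet_inv_iff hn hA hf hfshape]
  refine ⟨hleft, fun w => ?_⟩
  rw [InvFireworks, ← shape_inv, hleft, leR_iff_leL_inv, leR_iff_leL_inv, eOf, layered_inv]

end RajRegularity
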